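/- arXiv:2110.13405 — 2 statements merged into one kernel-verified Lean document; each statement's English description precedes it below -/
import Mathlib

section
/- For every integer s, one has s ∈ H if and only if (2t − 1) − s ∉ H, where 2t − 1 = (n−2)·α − Σ_{i=1}^{n−1} α/a_i. (In particular, exactly one of any pair {s, (2t−1)−s} lies in H.) -/
/-!
Write `gᵢ = α / aᵢ`. Each `gᵢ` is a unit modulo `aᵢ` and divisible by every other `aⱼ`, so by the
Chinese remainder theorem every integer can be written as `∑ xᵢ gᵢ + m α` with `0 ≤ xᵢ < aᵢ`. In
this normal form it lies in `H` iff `m ≥ 0`: any representation in `H` differs from the normal form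
in coordinate `i` by a multiple of `aᵢ`, which must be nonnegative. As
`2t - 1 = ∑ (aᵢ - 1) gᵢ - α`, the map `s ↦ 2t - 1 - s` turns the normal form `(x, m)` into
`(a - 1 - x, -1 - m)`, and exactly one of `m`, `-1 - m` is nonnegative.
-/

open Finset Function

section Cofactor

variable {ι : Type*} [Fintype ι] [DecidableEq ι] (a : ι → ℤ)

def cofactor (i : ι) : ℤ := ∏ j ∈ univ.erase i, a j

theorem cofactor_mul_self (i : ι) : cofactor a i * a i = ∏ j, a j :=
  prod_erase_mul _ _ (mem_univ i)

theorem prod_div_eq_cofactor {i : ι} (hi : a i ≠ 0) : (∏ j, a j) / a i = cofactor a i := by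
  rw [← cofactor_mul_self, Int.mul_ediv_cancel _ hi]

theorem dvd_cofactor {i j : ι} (h : i ≠ j) : a i ∣ cofactor a j :=
  dvd_prod_of_mem a (mem_erase.2 ⟨h, mem_univ i⟩)

theorem isCoprime_cofactor (hcop : Pairwise (IsCoprime on a)) (i : ι) :
    IsCoprime (cofactor a i) (a i) :=
  IsCoprime.prod_left fun _ hj => hcop (ne_of_mem_erase hj)

theorem sum_mul_cofactor_modEq (y : ι → ℤ) (i : ι) :
    ∑ j, y j * cofactor a j ≡ y i * cofactor a i [ZMOD a i] := by
  have hrest : ∑ j ∈ univ.erase i, y j * cofactor a j ≡ 0 [ZMOD a i] :=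
    Int.modEq_zero_iff_dvd.2 <|
      dvd_sum fun j hj => (dvd_cofactor a (ne_of_mem_erase hj).symm).mul_left (y j)
  rw [← add_sum_erase _ _ (mem_univ i)]
  simpa using hrest.add_left (y i * cofactor a i)

theorem dvd_of_prod_dvd_sum_mul_cofactor (hcop : Pairwise (IsCoprime on a)) {y : ι → ℤ}
    (h : (∏ j, a j) ∣ ∑ j, y j * cofactor a j) (i : ι) : a i ∣ y i := by
  have hi : a i ∣ ∑ j, y j * cofactor a j := (dvd_prod_of_mem a (mem_univ i)).trans h
  exact (isCoprime_cofactor a hcop i).symm.dvd_of_dvd_mul_right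
    ((Int.ModEq.dvd_iff (sum_mul_cofactor_modEq a y i)).1 hi)

theorem exists_sum_mul_cofactor_add_mul_prod (ha : ∀ i, 0 < a i)
    (hcop : Pairwise (IsCoprime on a)) (s : ℤ) :
    ∃ x : ι → ℤ, (∀ i, 0 ≤ x i ∧ x i < a i) ∧
      ∃ m : ℤ, s = ∑ i, x i * cofactor a i + m * ∏ i, a i := by
  choose u v huv using isCoprime_cofactor a hcop
  set x : ι → ℤ := fun i => s * u i % a i
  have hmod : ∀ i, ∑ j, x j * cofactor a j ≡ s [ZMOD a i] := fun i =>
    calc ∑ j, x j * cofactor a j ≡ x i * cofactor a i [ZMOD a i] := sum_mul_cofactor_modEq a x i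
      _ ≡ s * (u i * cofactor a i + v i * a i) [ZMOD a i] := by
        refine ((Int.mod_modEq _ _).mul_right _).trans (Int.modEq_iff_dvd.2 ⟨s * v i, ?_⟩)
        ring
      _ = s := by rw [huv, mul_one]
  have hdvd : (∏ i, a i) ∣ s - ∑ j, x j * cofactor a j :=
    prod_dvd_of_coprime (fun i _ j _ hij => hcop hij) fun i _ => (hmod i).dvd
  refine ⟨x, fun i => ⟨Int.emod_nonneg _ (ha i).ne', Int.emod_lt_of_pos _ (ha i)⟩,
    (s - ∑ j, x j * cofactor a j) / ∏ i, a i, ?_⟩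
  rw [Int.ediv_mul_cancel hdvd]
  ring

theorem sum_sub_one_mul_cofactor_sub_prod :
    ∑ i, (a i - 1) * cofactor a i - ∏ i, a i
      = ((Fintype.card ι : ℤ) - 1) * ∏ i, a i - ∑ i, cofactor a i := by
  simp only [sub_one_mul, mul_comm (a _), cofactor_mul_self, sum_sub_distrib, sum_const,
    card_univ, nsmul_eq_mul]
  ring

def cofactorSemigroup : AddSubmonoid ℤ := AddSubmonoid.closure (Set.range (cofactor a))

theorem mem_cofactorSemigroup_iff {s : ℤ} :
    s ∈ cofactorSemigroup a ↔ ∃ c : ι → ℕ, s = ∑ i, (c i : ℤ) * cofactor a i := by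
  simp only [cofactorSemigroup, AddSubmonoid.mem_closure_range_iff_of_fintype, nsmul_eq_mul]

theorem sum_mul_cofactor_mem_cofactorSemigroup {x : ι → ℤ} (hx : ∀ i, 0 ≤ x i) :
    ∑ i, x i * cofactor a i ∈ cofactorSemigroup a :=
  (mem_cofactorSemigroup_iff a).2
    ⟨fun i => (x i).toNat, by simp only [Int.toNat_of_nonneg (hx _)]⟩

theorem mul_prod_mem_cofactorSemigroup [Nonempty ι] (ha : ∀ i, 0 ≤ a i) {m : ℤ}
    (hm : 0 ≤ m) :
    m * ∏ i, a i ∈ cofactorSemigroup a := by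
  obtain ⟨i⟩ := ‹Nonempty ι›
  have h : m * ∏ j, a j = (m * a i).toNat • cofactor a i := by
    rw [nsmul_eq_mul, Int.toNat_of_nonneg (mul_nonneg hm (ha i)), mul_assoc, mul_comm (a i),
      cofactor_mul_self]
  exact h ▸ nsmul_mem (AddSubmonoid.subset_closure (Set.mem_range_self i)) _

theorem sum_mul_cofactor_add_mul_prod_mem_cofactorSemigroup_iff [Nonempty ι]
    (ha : ∀ i, 0 < a i) (hcop : Pairwise (IsCoprime on a)) {x : ι → ℤ}
    (hx : ∀ i, 0 ≤ x i ∧ x i < a i) (m : ℤ) :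
    ∑ i, x i * cofactor a i + m * ∏ i, a i ∈ cofactorSemigroup a ↔ 0 ≤ m := by
  refine ⟨fun h => ?_, fun hm => add_mem (sum_mul_cofactor_mem_cofactorSemigroup a
    fun i => (hx i).1) (mul_prod_mem_cofactorSemigroup a (fun i => (ha i).le) hm)⟩
  obtain ⟨c, hc⟩ := (mem_cofactorSemigroup_iff a).1 h
  have hsum : m * ∏ i, a i = ∑ i, ((c i : ℤ) - x i) * cofactor a i := by
    simp only [sub_mul, sum_sub_distrib]
    linarith
  have hcx : ∀ i, 0 ≤ (c i : ℤ) - x i := fun i => by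
    obtain ⟨k, hk⟩ :=
      dvd_of_prod_dvd_sum_mul_cofactor a hcop ⟨m, by rw [← hsum, mul_comm]⟩ i
    have : -1 < k :=
      lt_of_mul_lt_mul_left (by linarith [(hx i).2, (c i).cast_nonneg (α := ℤ)]) (ha i).le
    rw [hk]
    exact mul_nonneg (ha i).le (by omega)
  have hcof : ∀ i, 0 ≤ cofactor a i := fun i => prod_nonneg fun j _ => (ha j).le
  have : 0 ≤ m * ∏ i, a i := hsum ▸ sum_nonneg fun i _ => mul_nonneg (hcx i) (hcof i)
  exact nonneg_of_mul_nonneg_left this (prod_pos fun i _ => ha i)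

theorem mem_cofactorSemigroup_iff_not_mem_sub [Nonempty ι] (ha : ∀ i, 0 < a i)
    (hcop : Pairwise (IsCoprime on a)) (s : ℤ) :
    s ∈ cofactorSemigroup a ↔
      (∑ i, (a i - 1) * cofactor a i - ∏ i, a i) - s ∉ cofactorSemigroup a := by
  obtain ⟨x, hx, m, rfl⟩ := exists_sum_mul_cofactor_add_mul_prod a ha hcop s
  have hrefl : (∑ i, (a i - 1) * cofactor a i - ∏ i, a i) -
        (∑ i, x i * cofactor a i + m * ∏ i, a i) =
      ∑ i, (a i - 1 - x i) * cofactor a i + (-1 - m) * ∏ i, a i := by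
    simp only [sub_mul, sum_sub_distrib]
    ring
  have hy : ∀ i, 0 ≤ a i - 1 - x i ∧ a i - 1 - x i < a i := fun i => by
    constructor <;> linarith [hx i]
  rw [hrefl, sum_mul_cofactor_add_mul_prod_mem_cofactorSemigroup_iff a ha hcop hx,
    sum_mul_cofactor_add_mul_prod_mem_cofactorSemigroup_iff a ha hcop hy]
  omega

end Cofactor

/-- For every integer s, s ∈ H iff (2t − 1) − s ∉ H, where H is the numerical semigroup generated by the α/a_i and 2t − 1 = (n−2)·α − Σ α/a_i. -/
theorem stmt_10 (n : ℕ) (hn : 3 ≤ n) (a : Fin (n - 1) → ℤ)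
    (ha : ∀ i, 2 ≤ a i)
    (hcop : ∀ i j, i ≠ j → IsCoprime (a i) (a j))
    (α : ℤ) (hα : α = ∏ i, a i)
    (t : ℤ) (ht : 2 * t = ((n : ℤ) - 2) * α - (∑ i, α / a i) + 1) :
    ∀ s : ℤ,
      ((∃ c : Fin (n - 1) → ℕ, s = ∑ i, (c i : ℤ) * (α / a i)) ↔
        ¬ (∃ c : Fin (n - 1) → ℕ, 2 * t - 1 - s = ∑ i, (c i : ℤ) * (α / a i))) := by
  have hpos : ∀ i, 0 < a i := fun i => by linarith [ha i]
  have : Nonempty (Fin (n - 1)) := ⟨⟨0, by omega⟩⟩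
  subst hα
  have hgen : ∀ i, (∏ j, a j) / a i = cofactor a i := fun i =>
    prod_div_eq_cofactor a (hpos i).ne'
  have hF : 2 * t - 1 = ∑ i, (a i - 1) * cofactor a i - ∏ i, a i := by
    rw [sum_sub_one_mul_cofactor_sub_prod, Fintype.card_fin, Nat.cast_sub (by omega)]
    simp only [hgen] at ht
    push_cast
    linarith
  intro s
  simp only [hgen, ← mem_cofactorSemigroup_iff, hF]
  exact mem_cofactorSemigroup_iff_not_mem_sub a hpos (fun i j hij => hcop i j hij) s
end

section
/- The Δ-functions of Y = Σ(a_1,…,a_n) and Y' = Σ(a_1,…,a_{n−1},a_n+α) agree on their respective critical strips: for every integer i with 0 < i ≤ α, one has Δ((t−1)·a_n − α + i) = Δ'((t−1)·(a_n+α) − α + i). -/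
/-!
Reducing the Seifert equation `e₀P + Σ bᵢP/aᵢ + bₙP/aₙ = -1` modulo `aⱼ` gives
`bⱼ·(P/aⱼ) ≡ -1`, which pins down `bⱼ ∈ [0, aⱼ)`; so the equation determines `(e₀, b, bₙ)`.
With `m = -(e₀α + Σ bᵢα/aᵢ)`, i.e. `m·aₙ - bₙ·α = 1`, the triple `(e₀, b, bₙ + m)` solves the
equation for `aₙ + α`, hence it is the data of `Y'`. Moving from `x = (t-1)aₙ + y` to
`x' = (t-1)(aₙ + α) + y` adds `(t-1)(α/aᵢ)bᵢ` to the `i`-th ceiling, and, because `bₙ/aₙ` and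
`(bₙ + m)/(aₙ + α)` are Farey neighbours, adds `(t-1)m` to the last one as long as
`-(aₙ + α) < y ≤ 0`. These increments sum to `(t-1)(Σ bᵢα/aᵢ + m) = |e₀|(t-1)α`.
-/

open Finset

theorem ceil_mul_div_of_eq_add_mul {x x' k b d : ℤ} (hd : d ≠ 0) (h : x' = x + k * d) :
    ⌈(x' * b : ℚ) / d⌉ = ⌈(x * b : ℚ) / d⌉ + k * b := by
  have hd' : (d : ℚ) ≠ 0 := by exact_mod_cast hd
  rw [← Int.ceil_add_intCast, h]
  congr 1
  push_cast
  field_simp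

/-- `y b'/d' - y b/d = y/(d d') ∈ (-1/d, 0]` is too small to move `y b/d ∈ ℤ/d` past an integer. -/
theorem ceil_mul_div_eq_of_mul_sub_mul_eq_one {b d b' d' y : ℤ} (hd : 0 < d) (hd' : 0 < d')
    (h : b' * d - b * d' = 1) (hy : -d' < y) (hy₀ : y ≤ 0) :
    ⌈(y * b' : ℚ) / d'⌉ = ⌈(y * b : ℚ) / d⌉ := by
  set N := ⌈(y * b : ℚ) / d⌉
  have hdq : (0 : ℚ) < d := by exact_mod_cast hd
  have hdq' : (0 : ℚ) < d' := by exact_mod_cast hd'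
  have hN : (N - 1) * d < y * b := by
    have := Int.ceil_lt_add_one ((y * b : ℚ) / d)
    rw [← sub_lt_iff_lt_add, lt_div_iff₀ hdq] at this
    exact_mod_cast (by linarith : ((N : ℚ) - 1) * d < y * b)
  have hq : (b' * d : ℚ) = b * d' + 1 := by exact_mod_cast (by linarith : b' * d = b * d' + 1)
  rw [Int.ceil_eq_iff, lt_div_iff₀ hdq', div_le_iff₀ hdq']
  constructor
  · have : (((N - 1) * d + 1 : ℤ) : ℚ) ≤ y * b := by exact_mod_cast hN
    push_cast at this
    have hyq : (-d' : ℚ) < y := by exact_mod_cast hy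
    nlinarith
  · have := Int.le_ceil ((y * b : ℚ) / d)
    rw [div_le_iff₀ hdq] at this
    have hyq : (y : ℚ) ≤ 0 := by exact_mod_cast hy₀
    nlinarith

theorem pos_and_le_of_mul_eq_mul_add_one {m d b α : ℤ} (hm : m * d = b * α + 1) (hb : 0 ≤ b)
    (hbd : b < d) (hα : 0 < α) : 0 < m ∧ m ≤ α := by
  have hd : 0 < d := hb.trans_lt hbd
  constructor <;> nlinarith [mul_nonneg hb hα.le]

theorem Int.eq_of_mul_modEq_neg_one {d u x y : ℤ} (hx : x * u ≡ -1 [ZMOD d])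
    (hy : y * u ≡ -1 [ZMOD d]) (hx₀ : 0 ≤ x) (hxd : x < d) (hy₀ : 0 ≤ y) (hyd : y < d) :
    x = y := by
  have hxy : x ≡ y [ZMOD d] :=
    calc x = -(x * -1) := by ring
      _ ≡ -(x * (y * u)) [ZMOD d] := (hy.symm.mul_left x).neg
      _ = -(y * (x * u)) := by ring
      _ ≡ -(y * -1) [ZMOD d] := (hx.mul_left y).neg
      _ = y := by ring
  rwa [Int.ModEq, Int.emod_eq_of_lt hx₀ hxd, Int.emod_eq_of_lt hy₀ hyd] at hxy

section Seifert

variable {ι : Type*} [Fintype ι] [DecidableEq ι]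

def SeifertEq (a : ι → ℤ) (an e : ℤ) (b : ι → ℤ) (bn : ℤ) : Prop :=
  e * ((∏ i, a i) * an) + ∑ i, b i * ((∏ i, a i) * an / a i) + bn * ∏ i, a i = -1

variable {a b b' : ι → ℤ} {an e e' bn bn' : ℤ}

theorem prod_mul_ediv {j : ι} (hj : a j ≠ 0) (c : ℤ) :
    (∏ i, a i) * c / a j = (∏ i ∈ univ.erase j, a i) * c := by
  rw [← mul_prod_erase univ a (mem_univ j), mul_assoc, Int.mul_ediv_cancel_left _ hj]

theorem seifertEq_iff (ha : ∀ i, a i ≠ 0) :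
    SeifertEq a an e b bn ↔
      (e * ∏ i, a i + ∑ i, b i * ∏ k ∈ univ.erase i, a k) * an + bn * ∏ i, a i = -1 := by
  have hsum : ∑ i, b i * ((∏ i, a i) * an / a i) = (∑ i, b i * ∏ k ∈ univ.erase i, a k) * an := by
    rw [sum_mul]
    exact sum_congr rfl fun i _ => by rw [prod_mul_ediv (ha i), mul_assoc]
  rw [SeifertEq, hsum]
  constructor <;> intro h <;> linarith

theorem SeifertEq.modEq_fiber (ha : ∀ i, a i ≠ 0) (h : SeifertEq a an e b bn) (j : ι) :
    b j * ((∏ k ∈ univ.erase j, a k) * an) ≡ -1 [ZMOD a j] := by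
  rw [seifertEq_iff ha, add_mul, sum_mul, ← add_sum_erase _ _ (mem_univ j)] at h
  have hα : a j ∣ ∏ i, a i := dvd_prod_of_mem a (mem_univ j)
  have hrest : ∀ i ∈ univ.erase j, a j ∣ b i * (∏ k ∈ univ.erase i, a k) * an := fun i hi =>
    ((dvd_prod_of_mem a (mem_erase.2 ⟨(ne_of_mem_erase hi).symm, mem_univ j⟩)).mul_left _).mul_right _
  rw [Int.modEq_iff_dvd]
  have hsplit : -1 - b j * ((∏ k ∈ univ.erase j, a k) * an) =
      e * (∏ i, a i) * an + ∑ i ∈ univ.erase j, b i * (∏ k ∈ univ.erase i, a k) * an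
        + bn * ∏ i, a i := by
    linear_combination -h
  rw [hsplit]
  exact (((hα.mul_left e).mul_right an).add (dvd_sum hrest)).add (hα.mul_left bn)

theorem SeifertEq.modEq_last (ha : ∀ i, a i ≠ 0) (h : SeifertEq a an e b bn) :
    bn * ∏ i, a i ≡ -1 [ZMOD an] := by
  rw [seifertEq_iff ha] at h
  rw [Int.modEq_iff_dvd, ← h]
  exact ⟨e * ∏ i, a i + ∑ i, b i * ∏ k ∈ univ.erase i, a k, by ring⟩

theorem SeifertEq.unique (h : SeifertEq a an e b bn) (h' : SeifertEq a an e' b' bn')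
    (hb : ∀ i, 0 ≤ b i ∧ b i < a i) (hb' : ∀ i, 0 ≤ b' i ∧ b' i < a i)
    (hbn : 0 ≤ bn ∧ bn < an) (hbn' : 0 ≤ bn' ∧ bn' < an) :
    e = e' ∧ b = b' ∧ bn = bn' := by
  have ha : ∀ i, a i ≠ 0 := fun i => by linarith [hb i]
  have hbb' : b = b' := funext fun j =>
    Int.eq_of_mul_modEq_neg_one (h.modEq_fiber ha j) (h'.modEq_fiber ha j) (hb j).1 (hb j).2
      (hb' j).1 (hb' j).2
  have hbnbn' : bn = bn' :=
    Int.eq_of_mul_modEq_neg_one (h.modEq_last ha) (h'.modEq_last ha) hbn.1 hbn.2 hbn'.1 hbn'.2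
  subst hbb' hbnbn'
  have hP : (∏ i, a i) * an ≠ 0 :=
    mul_ne_zero (prod_ne_zero_iff.2 fun i _ => ha i) (by linarith)
  exact ⟨mul_right_cancel₀ hP (by unfold SeifertEq at h h'; linarith), rfl, rfl⟩

theorem SeifertEq.exists_mul_eq (ha : ∀ i, a i ≠ 0) (h : SeifertEq a an e b bn) :
    ∃ m, m * an = bn * ∏ i, a i + 1 := by
  obtain ⟨m, hm⟩ := (h.modEq_last ha).symm.dvd
  exact ⟨m, by linarith⟩

theorem SeifertEq.mul_prod_add_sum_eq (ha : ∀ i, a i ≠ 0) (h : SeifertEq a an e b bn)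
    (han : an ≠ 0) {m : ℤ} (hm : m * an = bn * ∏ i, a i + 1) :
    e * ∏ i, a i + ∑ i, b i * ∏ k ∈ univ.erase i, a k = -m := by
  rw [seifertEq_iff ha] at h
  exact mul_right_cancel₀ han (by linarith)

theorem SeifertEq.add_prod (ha : ∀ i, a i ≠ 0) (h : SeifertEq a an e b bn) (han : an ≠ 0)
    {m : ℤ} (hm : m * an = bn * ∏ i, a i + 1) :
    SeifertEq a (an + ∏ i, a i) e b (bn + m) := by
  have hsum := h.mul_prod_add_sum_eq ha han hm
  rw [seifertEq_iff ha] at h ⊢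
  linear_combination h + (∏ i, a i) * hsum

def seifertDelta (a : ι → ℤ) (an e : ℤ) (b : ι → ℤ) (bn : ℤ) (x : ℤ) : ℤ :=
  1 + |e| * x - ((∑ i, ⌈(x * b i : ℚ) / (a i : ℚ)⌉) + ⌈(x * bn : ℚ) / (an : ℚ)⌉)

theorem SeifertEq.seifertDelta_add_prod (h : SeifertEq a an e b bn)
    (hb : ∀ i, 0 ≤ b i ∧ b i < a i) (hbn : 0 ≤ bn ∧ bn < an)
    {m : ℤ} (hm : m * an = bn * ∏ i, a i + 1) (c : ℤ) {y : ℤ}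
    (hy : -(an + ∏ i, a i) < y) (hy₀ : y ≤ 0) :
    seifertDelta a (an + ∏ i, a i) e b (bn + m) (c * (an + ∏ i, a i) + y) =
      seifertDelta a an e b bn (c * an + y) := by
  have ha : ∀ i, 0 < a i := fun i => by linarith [hb i]
  have hα : 0 < ∏ i, a i := prod_pos fun i _ => ha i
  have hsum := h.mul_prod_add_sum_eq (fun i => (ha i).ne') (by linarith) hm
  set S := ∑ i, b i * ∏ k ∈ univ.erase i, a k
  have hS : 0 ≤ S := sum_nonneg fun i _ => mul_nonneg (hb i).1 (prod_pos fun k _ => ha k).le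
  have hm₀ := (pos_and_le_of_mul_eq_mul_add_one hm hbn.1 hbn.2 hα).1
  have he : e < 0 := neg_of_mul_neg_left (by linarith) hα.le
  have hfiber : ∀ j, ⌈((c * (an + ∏ i, a i) + y : ℤ) * b j : ℚ) / a j⌉ =
      ⌈((c * an + y : ℤ) * b j : ℚ) / a j⌉ + c * (∏ k ∈ univ.erase j, a k) * b j := fun j =>
    ceil_mul_div_of_eq_add_mul (ha j).ne' (by rw [← mul_prod_erase univ a (mem_univ j)]; ring)
  have hfarey : ⌈(y * (bn + m : ℤ) : ℚ) / (an + ∏ i, a i : ℤ)⌉ = ⌈(y * bn : ℚ) / an⌉ :=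
    ceil_mul_div_eq_of_mul_sub_mul_eq_one (by linarith) (by linarith) (by linear_combination hm)
      hy hy₀
  have hlast : ⌈((c * (an + ∏ i, a i) + y : ℤ) * (bn + m : ℤ) : ℚ) / (an + ∏ i, a i : ℤ)⌉ =
      ⌈((c * an + y : ℤ) * bn : ℚ) / an⌉ + c * m := by
    rw [ceil_mul_div_of_eq_add_mul (by linarith) (add_comm _ _),
      ceil_mul_div_of_eq_add_mul (x := y) (by linarith) (add_comm _ _), hfarey]
    ring
  have hsumS : ∑ j, c * (∏ k ∈ univ.erase j, a k) * b j = c * S := by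
    rw [mul_sum]
    exact sum_congr rfl fun j _ => by ring
  simp only [seifertDelta]
  rw [abs_of_neg he, sum_congr rfl fun j _ => hfiber j, sum_add_distrib, hsumS, hlast]
  linear_combination (-c) * hsum

end Seifert

theorem stmt_16_general (n : ℕ) (a : Fin (n - 1) → ℤ) (an : ℤ)
    (α P : ℤ) (hα : α = ∏ i, a i) (hP : P = α * an)
    (e0 : ℤ) (b : Fin (n - 1) → ℤ) (bn : ℤ)
    (hb : ∀ i, 1 ≤ b i ∧ b i < a i) (hbn : 1 ≤ bn ∧ bn < an)
    (heq : e0 * P + (∑ i, b i * (P / a i)) + bn * α = -1)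
    (Δ : ℤ → ℤ)
    (hΔ : ∀ x : ℤ, Δ x = 1 + |e0| * x -
      ((∑ i, ⌈(x * b i : ℚ) / (a i : ℚ)⌉) + ⌈(x * bn : ℚ) / (an : ℚ)⌉))
    -- the modified Seifert data with last fiber an' = an + α
    (an' P' : ℤ) (han' : an' = an + α) (hP' : P' = α * an')
    (e0' : ℤ) (b' : Fin (n - 1) → ℤ) (bn' : ℤ)
    (hb' : ∀ i, 1 ≤ b' i ∧ b' i < a i) (hbn' : 1 ≤ bn' ∧ bn' < an')
    (heq' : e0' * P' + (∑ i, b' i * (P' / a i)) + bn' * α = -1)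
    (Δ' : ℤ → ℤ)
    (hΔ' : ∀ x : ℤ, Δ' x = 1 + |e0'| * x -
      ((∑ i, ⌈(x * b' i : ℚ) / (a i : ℚ)⌉) + ⌈(x * bn' : ℚ) / (an' : ℚ)⌉))
    (t : ℤ) :
    ∀ i : ℤ, 0 < i → i ≤ α →
      Δ ((t - 1) * an - α + i) = Δ' ((t - 1) * (an + α) - α + i) := by
  intro i hi hiα
  subst hα hP han' hP'
  replace heq : SeifertEq a an e0 b bn := heq
  replace heq' : SeifertEq a (an + ∏ j, a j) e0' b' bn' := heq'
  have hb₀ : ∀ j, 0 ≤ b j ∧ b j < a j := fun j => ⟨by linarith [hb j], (hb j).2⟩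
  have hb₀' : ∀ j, 0 ≤ b' j ∧ b' j < a j := fun j => ⟨by linarith [hb' j], (hb' j).2⟩
  have ha : ∀ j, a j ≠ 0 := fun j => by linarith [hb j]
  have hα : 0 < ∏ j, a j := prod_pos fun j _ => by linarith [hb j]
  obtain ⟨m, hm⟩ := heq.exists_mul_eq ha
  obtain ⟨hm₀, hmα⟩ := pos_and_le_of_mul_eq_mul_add_one hm (by linarith) hbn.2 hα
  obtain ⟨he, hbb, hbbn⟩ := heq'.unique (heq.add_prod ha (by linarith) hm) hb₀' hb₀
    ⟨by linarith, hbn'.2⟩ ⟨by linarith, by linarith⟩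
  subst e0' b' bn'
  rw [show Δ = seifertDelta a an e0 b bn from funext hΔ,
    show Δ' = seifertDelta a _ e0 b _ from funext hΔ',
    show (t - 1) * an - ∏ j, a j + i = (t - 1) * an + (i - ∏ j, a j) by ring,
    show (t - 1) * (an + ∏ j, a j) - ∏ j, a j + i = (t - 1) * (an + ∏ j, a j) + (i - ∏ j, a j)
      by ring]
  exact (heq.seifertDelta_add_prod hb₀ ⟨by linarith, hbn.2⟩ hm _ (by linarith) (by linarith)).symm

/-- The Δ-functions of Σ(a_1,…,a_n) and Σ(a_1,…,a_{n−1},a_n+α) agree on their respective critical strips: for 0 < i ≤ α, Δ((t−1)·a_n − α + i) = Δ′((t−1)·(a_n+α) − α + i). -/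
theorem stmt_16 (n : ℕ) (hn : 3 ≤ n) (a : Fin (n - 1) → ℤ) (an : ℤ)
    (ha : ∀ i, 2 ≤ a i) (han : 2 ≤ an)
    (hcop : ∀ i j, i ≠ j → IsCoprime (a i) (a j))
    (hcopn : ∀ i, IsCoprime (a i) an)
    (α P : ℤ) (hα : α = ∏ i, a i) (hP : P = α * an)
    (e0 : ℤ) (b : Fin (n - 1) → ℤ) (bn : ℤ)
    (hb : ∀ i, 1 ≤ b i ∧ b i < a i) (hbn : 1 ≤ bn ∧ bn < an)
    (heq : e0 * P + (∑ i, b i * (P / a i)) + bn * α = -1)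
    (Δ : ℤ → ℤ)
    (hΔ : ∀ x : ℤ, Δ x = 1 + |e0| * x -
      ((∑ i, ⌈(x * b i : ℚ) / (a i : ℚ)⌉) + ⌈(x * bn : ℚ) / (an : ℚ)⌉))
    -- the modified Seifert data with last fiber an' = an + α
    (an' P' : ℤ) (han' : an' = an + α) (hP' : P' = α * an')
    (e0' : ℤ) (b' : Fin (n - 1) → ℤ) (bn' : ℤ)
    (hb' : ∀ i, 1 ≤ b' i ∧ b' i < a i) (hbn' : 1 ≤ bn' ∧ bn' < an')
    (heq' : e0' * P' + (∑ i, b' i * (P' / a i)) + bn' * α = -1)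
    (Δ' : ℤ → ℤ)
    (hΔ' : ∀ x : ℤ, Δ' x = 1 + |e0'| * x -
      ((∑ i, ⌈(x * b' i : ℚ) / (a i : ℚ)⌉) + ⌈(x * bn' : ℚ) / (an' : ℚ)⌉))
    (t : ℤ) (ht : 2 * t = ((n : ℤ) - 2) * α - (∑ i, α / a i) + 1) :
    ∀ i : ℤ, 0 < i → i ≤ α →
      Δ ((t - 1) * an - α + i) = Δ' ((t - 1) * (an + α) - α + i) :=
  stmt_16_general n a an α P hα hP e0 b bn hb hbn heq Δ hΔ an' P' han' hP' e0' b' bn' hb' hbn' heq'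
    Δ' hΔ' t
end
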